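/- Composing a forward transition followed by a reverse transition with exact x₀ is the identity on the mean: if x_i = f_i·x₀ + b_i + σ_i·ε₀ with ε₀ standard Gaussian independent of ε, x* = (f*/f_i)·x_i + γ₁ + σ_f·ε with γ₁ = b* − (f*/f_i)·b_i and σ_f² = (σ*)² − (f*·σ_i/f_i)² ≥ 0, and then x' = (σ_i'/σ*)·x* + β₂·x₀ + γ₂ with β₂ = f_i' − (σ_i'/σ*)·f* ≥ 0 and γ₂ = b_i' − (σ_i'/σ*)·b*, then conditional on x₀, x' is Gaussian with mean f_i'·x₀ + b_i' and variance (σ_i'/σ*)²·((f*·σ_i/f_i)² + σ_f²) = (σ_i')². -/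

import Mathlib

open MeasureTheory ProbabilityTheory

open Real
open scoped NNReal ENNReal

lemma gauss_pdf_conv (v w : ℝ≥0) (hv : v ≠ 0) (hw : w ≠ 0) (z : ℝ) :
    ∫ x, gaussianPDFReal 0 v x * gaussianPDFReal 0 w (z - x)
      = gaussianPDFReal 0 (v + w) z := by
  have hv' : (0:ℝ) < v := lt_of_le_of_ne v.coe_nonneg (by exact_mod_cast (Ne.symm hv))
  have hw' : (0:ℝ) < w := lt_of_le_of_ne w.coe_nonneg (by exact_mod_cast (Ne.symm hw))
  set b : ℝ := ((v:ℝ) + w) / (2 * v * w) with hb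
  set c : ℝ := (v:ℝ) * z / ((v:ℝ) + w) with hc
  have hbpos : 0 < b := by positivity
  have key : ∀ x : ℝ, gaussianPDFReal 0 v x * gaussianPDFReal 0 w (z - x)
      = ((√(2 * π * v))⁻¹ * (√(2 * π * w))⁻¹ * rexp (-(z - 0)^2 / (2 * ((v:ℝ) + w))))
        * rexp (-b * (x - c)^2) := by
    intro x
    simp only [gaussianPDFReal, sub_zero]
    have hexp : -x ^ 2 / (2 * (v:ℝ)) + -(z - x) ^ 2 / (2 * (w:ℝ))
        = -z ^ 2 / (2 * ((v:ℝ) + w)) + -b * (x - c) ^ 2 := by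
      rw [hb, hc]; field_simp; ring
    rw [mul_mul_mul_comm, ← Real.exp_add, hexp, Real.exp_add]
    ring
  rw [integral_congr_ae (ae_of_all _ key), integral_const_mul,
    integral_sub_right_eq_self (fun x => rexp (-b * x ^ 2)) c, integral_gaussian]
  have h1 : π / b = 2 * π * v * w / ((v:ℝ) + w) := by
    rw [hb]; field_simp
  rw [gaussianPDFReal, sub_zero]
  have h2 : (√(2 * π * v))⁻¹ * (√(2 * π * w))⁻¹ * √(π / b)
      = (√(2 * π * ((v:ℝ) + w)))⁻¹ := by
    rw [h1, ← Real.sqrt_inv, ← Real.sqrt_inv, ← Real.sqrt_mul (by positivity),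
      ← Real.sqrt_mul (by positivity), ← Real.sqrt_inv]
    congr 1
    field_simp
  push_cast
  rw [mul_comm (_ * _ * _) (√(π/b)), ← mul_assoc, mul_comm (√(π/b)), h2]

lemma gauss_pdf_le (μ : ℝ) (w : ℝ≥0) (y : ℝ) :
    gaussianPDFReal μ w y ≤ (√(2 * π * w))⁻¹ := by
  rw [gaussianPDFReal]
  calc (√(2 * π * w))⁻¹ * rexp (-(y - μ) ^ 2 / (2 * w))
      ≤ (√(2 * π * w))⁻¹ * 1 := by
        gcongr
        exact Real.exp_le_one_iff.mpr (div_nonpos_of_nonpos_of_nonneg (neg_nonpos.mpr (sq_nonneg _)) (by positivity))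
    _ = _ := mul_one _

lemma gauss_pdf_conv' (v w : ℝ≥0) (hv : v ≠ 0) (hw : w ≠ 0) (z : ℝ) :
    ∫⁻ x, gaussianPDF 0 v x * gaussianPDF 0 w (z - x) = gaussianPDF 0 (v + w) z := by
  have hmeas : Measurable fun x => gaussianPDFReal 0 v x * gaussianPDFReal 0 w (z - x) :=
    (measurable_gaussianPDFReal 0 v).mul
      ((measurable_gaussianPDFReal 0 w).comp (measurable_const.sub measurable_id))
  have hint : Integrable (fun x => gaussianPDFReal 0 v x * gaussianPDFReal 0 w (z - x)) := by
    refine Integrable.mono' ((integrable_gaussianPDFReal 0 v).mul_const ((√(2 * π * w))⁻¹))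
      hmeas.aestronglyMeasurable (ae_of_all _ fun x => ?_)
    rw [Real.norm_eq_abs, abs_of_nonneg (mul_nonneg (gaussianPDFReal_nonneg _ _ _) (gaussianPDFReal_nonneg _ _ _))]
    exact mul_le_mul_of_nonneg_left (gauss_pdf_le 0 w _) (gaussianPDFReal_nonneg _ _ _)
  simp only [gaussianPDF]
  simp_rw [← ENNReal.ofReal_mul (gaussianPDFReal_nonneg 0 v _)]
  rw [← ofReal_integral_eq_lintegral_ofReal hint
    (ae_of_all _ fun x => mul_nonneg (gaussianPDFReal_nonneg _ _ _) (gaussianPDFReal_nonneg _ _ _)),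
    gauss_pdf_conv v w hv hw z]

lemma gauss_map_add (v w : ℝ≥0) (hv : v ≠ 0) (hw : w ≠ 0) :
    Measure.map (fun p : ℝ × ℝ => p.1 + p.2) ((gaussianReal 0 v).prod (gaussianReal 0 w))
      = gaussianReal 0 (v + w) := by
  have hvw : v + w ≠ 0 := fun h => hv (by simpa using (add_eq_zero.mp h).1)
  ext s hs
  rw [Measure.map_apply measurable_add hs, Measure.prod_apply (measurable_add hs)]
  have h1 : ∀ x : ℝ, (gaussianReal 0 w) (Prod.mk x ⁻¹' ((fun p : ℝ × ℝ => p.1 + p.2) ⁻¹' s))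
      = ∫⁻ z in s, gaussianPDF x w z := by
    intro x
    have hpre : Prod.mk x ⁻¹' ((fun p : ℝ × ℝ => p.1 + p.2) ⁻¹' s) = (fun y => x + y) ⁻¹' s := rfl
    rw [hpre, ← Measure.map_apply (measurable_const_add x) hs, gaussianReal_map_const_add,
      zero_add, gaussianReal_apply _ hw]
  simp_rw [h1]
  have hjm : Measurable (Function.uncurry fun x z => gaussianPDF x w z) := by
    apply Measurable.ennreal_ofReal
    apply Measurable.mul measurable_const
    exact (((measurable_snd.sub measurable_fst).pow_const _).neg.div_const _).exp
  rw [gaussianReal_of_var_ne_zero 0 hv,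
    lintegral_withDensity_eq_lintegral_mul volume (measurable_gaussianPDF 0 v)
      (Measurable.lintegral_prod_right hjm)]
  simp only [Pi.mul_apply]
  have h2 : ∀ x, gaussianPDF 0 v x * ∫⁻ z in s, gaussianPDF x w z
      = ∫⁻ z in s, gaussianPDF 0 v x * gaussianPDF x w z := fun x =>
    (lintegral_const_mul _ (measurable_gaussianPDF x w)).symm
  simp_rw [h2]
  have hjm2 : Measurable (Function.uncurry fun a z => gaussianPDF 0 v a * gaussianPDF a w z) :=
    ((measurable_gaussianPDF 0 v).comp measurable_fst).mul hjm
  rw [lintegral_lintegral_swap hjm2.aemeasurable]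
  have h3 : ∀ z x : ℝ, gaussianPDF x w z = gaussianPDF 0 w (z - x) := by
    intro z x
    rw [gaussianPDF, gaussianPDF, gaussianPDFReal_sub, zero_add]
  calc ∫⁻ z in s, ∫⁻ x, gaussianPDF 0 v x * gaussianPDF x w z
      = ∫⁻ z in s, gaussianPDF 0 (v + w) z := by
        refine setLIntegral_congr_fun hs (fun z _ => ?_)
        simp_rw [h3 z]
        exact gauss_pdf_conv' v w hv hw z
    _ = gaussianReal 0 (v + w) s := (gaussianReal_apply _ hvw s).symm

lemma rv_const_mul {Ω : Type*} [MeasureSpace Ω] {Z : Ω → ℝ} (hZ : Measurable Z) {μ : ℝ}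
    {v : ℝ≥0} (h : Measure.map Z ℙ = gaussianReal μ v) (c : ℝ) :
    Measure.map (fun ω => c * Z ω) ℙ = gaussianReal (c * μ) ((NNReal.mk (c ^ 2) (sq_nonneg _)) * v) := by
  rw [show (fun ω => c * Z ω) = (c * ·) ∘ Z from rfl,
    ← Measure.map_map (measurable_const_mul c) hZ, h, gaussianReal_map_const_mul]

lemma rv_add_const {Ω : Type*} [MeasureSpace Ω] {Z : Ω → ℝ} (hZ : Measurable Z) {μ : ℝ}
    {v : ℝ≥0} (h : Measure.map Z ℙ = gaussianReal μ v) (c : ℝ) :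
    Measure.map (fun ω => Z ω + c) ℙ = gaussianReal (μ + c) v := by
  rw [show (fun ω => Z ω + c) = (· + c) ∘ Z from rfl,
    ← Measure.map_map (measurable_add_const c) hZ, h, gaussianReal_map_add_const]

lemma gauss_rv_add {Ω : Type*} [MeasureSpace Ω] [IsProbabilityMeasure (ℙ : Measure Ω)]
    {X Y : Ω → ℝ} (hX : Measurable X) (hY : Measurable Y) {v w : ℝ≥0} (hv : v ≠ 0) (hw : w ≠ 0)
    (lX : Measure.map X ℙ = gaussianReal 0 v) (lY : Measure.map Y ℙ = gaussianReal 0 w)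
    (hindep : ProbabilityTheory.IndepFun X Y ℙ) :
    Measure.map (fun ω => X ω + Y ω) ℙ = gaussianReal 0 (v + w) := by
  have hpair : Measure.map (fun ω => (X ω, Y ω)) ℙ
      = (gaussianReal 0 v).prod (gaussianReal 0 w) := by
    rw [← lX, ← lY]
    exact (ProbabilityTheory.indepFun_iff_map_prod_eq_prod_map_map hX.aemeasurable
      hY.aemeasurable).mp hindep
  rw [show (fun ω => X ω + Y ω) = (fun p : ℝ × ℝ => p.1 + p.2) ∘ (fun ω => (X ω, Y ω)) from rfl,
    ← Measure.map_map measurable_add (hX.prodMk hY), hpair, gauss_map_add v w hv hw]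

/-- Composing a forward transition (minimal noise `σ_f`) with a reverse transition
(`σ = 0`, exact `x₀`) reproduces the bridge marginal: conditional on `x₀`, the result
`x'` is Gaussian with mean `f_i'·x₀ + b_i'` and variance
`(σ_i'/σ*)²((f*σ_i/f_i)² + σ_f²) = (σ_i')²`. -/
theorem stmt12 {Ω : Type*} [MeasureSpace Ω] [IsProbabilityMeasure (ℙ : Measure Ω)]
    (fi bi σi fs bs σs fi' bi' σi' x₀ : ℝ)
    (hfi : 0 < fi) (hσi : 0 < σi) (hfs : 0 < fs) (hσs : 0 < σs)
    (hfi' : 0 < fi') (hσi' : 0 < σi')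
    (hfwd : fs * σi / fi ≤ σs) (hrev : σi' * fs ≤ fi' * σs)
    (ε₀ ε : Ω → ℝ) (h0 : Measurable ε₀) (h1 : Measurable ε)
    (l0 : Measure.map ε₀ ℙ = gaussianReal 0 1)
    (l1 : Measure.map ε ℙ = gaussianReal 0 1)
    (hindep : IndepFun ε₀ ε ℙ)
    (σf γ₁ β₂ γ₂ : ℝ)
    (hσf : σf = Real.sqrt (σs ^ 2 - (fs * σi / fi) ^ 2))
    (hγ₁ : γ₁ = bs - (fs / fi) * bi)
    (hβ₂ : β₂ = fi' - (σi' / σs) * fs)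
    (hγ₂ : γ₂ = bi' - (σi' / σs) * bs)
    (xi xs x' : Ω → ℝ)
    (hxi : ∀ ω, xi ω = fi * x₀ + bi + σi * ε₀ ω)
    (hxs : ∀ ω, xs ω = (fs / fi) * xi ω + γ₁ + σf * ε ω)
    (hx' : ∀ ω, x' ω = (σi' / σs) * xs ω + β₂ * x₀ + γ₂) :
    (σi' / σs) ^ 2 * ((fs * σi / fi) ^ 2 + σf ^ 2) = σi' ^ 2 ∧
    Measure.map x' ℙ = gaussianReal (fi' * x₀ + bi') (⟨σi' ^ 2, sq_nonneg _⟩ : NNReal) := by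
  have hσs0 : σs ≠ 0 := hσs.ne'
  have hfi0 : fi ≠ 0 := hfi.ne'
  have hsub : 0 ≤ σs ^ 2 - (fs * σi / fi) ^ 2 := by
    have h := pow_le_pow_left₀ (by positivity) hfwd 2
    linarith
  have hσfsq : σf ^ 2 = σs ^ 2 - (fs * σi / fi) ^ 2 := by
    rw [hσf, Real.sq_sqrt hsub]
  have hσfnn : 0 ≤ σf := hσf ▸ Real.sqrt_nonneg _
  have hsum : (fs * σi / fi) ^ 2 + σf ^ 2 = σs ^ 2 := by rw [hσfsq]; ring
  have part1 : (σi' / σs) ^ 2 * ((fs * σi / fi) ^ 2 + σf ^ 2) = σi' ^ 2 := by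
    rw [hsum]; field_simp
  refine ⟨part1, ?_⟩
  set a : ℝ := σi' * fs * σi / (σs * fi) with ha
  set b : ℝ := (σi' / σs) * σf with hbdef
  have hapos : 0 < a := by positivity
  have hbnn : 0 ≤ b := by positivity
  have hab : a ^ 2 + b ^ 2 = σi' ^ 2 := by
    rw [← part1, ha, hbdef]
    field_simp
  have hx'e : ∀ ω, x' ω = a * ε₀ ω + b * ε ω + (fi' * x₀ + bi') := by
    intro ω
    rw [hx', hxs, hxi, hγ₁, hβ₂, hγ₂, ha, hbdef]
    field_simp
    ring
  have lA : Measure.map (fun ω => a * ε₀ ω) ℙ = gaussianReal 0 (NNReal.mk (a ^ 2) (sq_nonneg _)) := by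
    rw [rv_const_mul h0 l0 a, mul_zero, mul_one]
  have lB : Measure.map (fun ω => b * ε ω) ℙ = gaussianReal 0 (NNReal.mk (b ^ 2) (sq_nonneg _)) := by
    rw [rv_const_mul h1 l1 b, mul_zero, mul_one]
  have hxfun : x' = fun ω => a * ε₀ ω + b * ε ω + (fi' * x₀ + bi') := funext hx'e
  rw [hxfun]
  by_cases hb : b = 0
  · have hae : a ^ 2 = σi' ^ 2 := by rw [← hab, hb]; ring
    have : (fun ω => a * ε₀ ω + b * ε ω + (fi' * x₀ + bi'))
        = fun ω => (a * ε₀ ω) + (fi' * x₀ + bi') := by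
      funext ω; rw [hb]; ring
    rw [this, rv_add_const (h0.const_mul a) lA, zero_add]
    congr 1
    exact Subtype.ext hae
  · have hS : Measure.map (fun ω => a * ε₀ ω + b * ε ω) ℙ
        = gaussianReal 0 (NNReal.mk (a ^ 2) (sq_nonneg _) + NNReal.mk (b ^ 2) (sq_nonneg _)) := by
      refine gauss_rv_add (h0.const_mul a) (h1.const_mul b) ?_ ?_ lA lB
        (hindep.comp (measurable_const_mul a) (measurable_const_mul b))
      · exact fun h => hapos.ne' (pow_eq_zero_iff (n := 2) (by norm_num) |>.mp
          (by simpa using congrArg NNReal.toReal h))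
      · exact fun h => hb (pow_eq_zero_iff (n := 2) (by norm_num) |>.mp
          (by simpa using congrArg NNReal.toReal h))
    have hvv : (NNReal.mk (a ^ 2) (sq_nonneg _) + NNReal.mk (b ^ 2) (sq_nonneg _) : ℝ≥0)
        = (NNReal.mk (σi' ^ 2) (sq_nonneg _) : ℝ≥0) := by
      refine NNReal.eq ?_
      push_cast
      exact hab
    rw [rv_add_const (Z := fun ω => a * ε₀ ω + b * ε ω) ((h0.const_mul a).add (h1.const_mul b)) hS,
      zero_add, hvv]
    rfl
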